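/- Let n, m, K⋆, K be positive integers with K < K⋆ and n = m · K⋆. Let g⋆ : Fin n → Fin K⋆ be a map all of whose fibers have cardinality exactly m (a balanced partition into K⋆ true blocks), and let ĝ : Fin n → Fin K be any map (a partition into K estimated blocks). Then there exist an estimated block b ∈ Fin K and two distinct true blocks i, j ∈ Fin K⋆ with i ≠ j such that K · |{v : Fin n | ĝ v = b ∧ g⋆ v = i}| ≥ m and K · |{v : Fin n | ĝ v = b ∧ g⋆ v = j}| ≥ m; that is, some estimated block contains at least m/K nodes from each of two distinct true blocks. -/
import Mathlib


/-- Pigeonhole step for under-fitted balanced stochastic block models: if the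
`n = m * K⋆` nodes are partitioned into `K⋆` true blocks of size exactly `m`,
then for any assignment into `K < K⋆` estimated blocks, some estimated block
contains at least `m / K` nodes from each of two distinct true blocks. -/
theorem underfit_misaligned_block
    (n m Kstar K : ℕ) (hm : 0 < m) (hK : 0 < K) (hKlt : K < Kstar)
    (hn : n = m * Kstar)
    (gstar : Fin n → Fin Kstar) (ghat : Fin n → Fin K)
    (hbal : ∀ i : Fin Kstar, (Finset.univ.filter (fun v => gstar v = i)).card = m) :
    ∃ (b : Fin K) (i j : Fin Kstar), i ≠ j ∧
      m ≤ K * (Finset.univ.filter (fun v => ghat v = b ∧ gstar v = i)).card ∧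
      m ≤ K * (Finset.univ.filter (fun v => ghat v = b ∧ gstar v = j)).card := by
  -- for each true block i, some estimated block b gets at least m/K of its nodes
  have key : ∀ i : Fin Kstar, ∃ b : Fin K,
      m ≤ K * (Finset.univ.filter (fun v => ghat v = b ∧ gstar v = i)).card := by
    intro i
    have hsum : ∑ b : Fin K,
        (Finset.univ.filter (fun v => ghat v = b ∧ gstar v = i)).card = m := by
      rw [← hbal i]
      rw [Finset.card_eq_sum_card_fiberwise
        (f := ghat) (t := Finset.univ) (fun v _ => Finset.mem_univ _)]
      apply Finset.sum_congr rfl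
      intro b _
      congr 1
      ext v
      simp [Finset.mem_filter, and_comm]
    have h2 : ∑ _b : Fin K, m ≤ ∑ b : Fin K,
        K * (Finset.univ.filter (fun v => ghat v = b ∧ gstar v = i)).card := by
      rw [← Finset.mul_sum, hsum]
      simp [Finset.sum_const, mul_comm]
    obtain ⟨b, _, hb⟩ := Finset.exists_le_of_sum_le
      ⟨⟨0, hK⟩, Finset.mem_univ _⟩ h2
    exact ⟨b, hb⟩
  choose f hf using key
  have hcard : Fintype.card (Fin K) < Fintype.card (Fin Kstar) := by
    simpa using hKlt
  obtain ⟨i, j, hij, hfij⟩ := Fintype.exists_ne_map_eq_of_card_lt f hcard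
  exact ⟨f i, i, j, hij, hf i, hfij ▸ hf j⟩
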